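/- Let d ∈ ℕ, ε ∈ (0,1/8], let Q be a Borel probability measure on [0,1]^d, and let A ⊂ [0,1]^d be Borel. Suppose Borel measurable functions η_1, η_2 : [0,1]^d → [0,1] satisfy η_1(x) = η_2(x) for all x ∈ [0,1]^d ∖ A and η_1(x), η_2(x) ∈ [1/2−ε, 1/2+ε] for all x ∈ A. Then KL(P_{η_1,Q} ‖ P_{η_2,Q}) ≤ 18·ε²·Q(A). -/

import Mathlib

open MeasureTheory ENNReal Set

noncomputable section

namespace ZZS

/-! ## Basic geometry -/

/-- The closed unit cube `[0,1]^m`. -/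
def cube (m : ℕ) : Set (Fin m → ℝ) := Set.univ.pi fun _ => Set.Icc (0 : ℝ) 1

/-- The open unit cube `(0,1)^m`. -/
def cubeo (m : ℕ) : Set (Fin m → ℝ) := Set.univ.pi fun _ => Set.Ioo (0 : ℝ) 1

/-- The label set `{-1, 1} ⊆ ℝ`. -/
def labels : Set ℝ := {-1, 1}

/-- Euclidean distance on `Fin m → ℝ`. -/
def e2 {m : ℕ} (x z : Fin m → ℝ) : ℝ := Real.sqrt (∑ i, (x i - z i) ^ 2)

/-! ## Multi-index partial derivatives and Hölder balls -/

/-- Iterated partial derivative along a list of coordinate directions. -/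
def pderivList {m : ℕ} : List (Fin m) → ((Fin m → ℝ) → ℝ) → (Fin m → ℝ) → ℝ
  | [], f => f
  | i :: l, f => pderivList l fun x => fderiv ℝ f x (Pi.single i 1)

/-- The canonical list of directions attached to a multi-index. -/
def idxList {m : ℕ} (u : Fin m → ℕ) : List (Fin m) :=
  (List.finRange m).flatMap fun i => List.replicate (u i) i

/-- The partial derivative `D^u f` for a multi-index `u`. -/
def Dm {m : ℕ} (u : Fin m → ℕ) (f : (Fin m → ℝ) → ℝ) : (Fin m → ℝ) → ℝ :=
  pderivList (idxList u) f

/-- The order `‖u‖₁` of a multi-index `u`. -/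
def mord {m : ℕ} (u : Fin m → ℕ) : ℕ := ∑ i, u i

/-- The Hölder-`β` norm of `f`, suprema taken over the set `S` (value in `ℝ≥0∞`). -/
def holderNormOn (m : ℕ) (β : ℝ) (S : Set (Fin m → ℝ)) (f : (Fin m → ℝ) → ℝ) : ℝ≥0∞ :=
  (⨆ (u : Fin m → ℕ) (_ : (mord u : ℝ) < β) (x ∈ S), ENNReal.ofReal |Dm u f x|) +
    ⨆ (u : Fin m → ℕ) (_ : (⌈β⌉ : ℝ) - 1 ≤ (mord u : ℝ) ∧ (mord u : ℝ) < β)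
      (x ∈ S) (z ∈ S) (_ : x ≠ z),
      ENNReal.ofReal |Dm u f x - Dm u f z| /
        ENNReal.ofReal (e2 x z) ^ (β + 1 - (⌈β⌉ : ℝ))

/-- `⌈β - 1⌉`, the number of derivatives required for Hölder-`β` smoothness. -/
def smoothOrder (β : ℝ) : ℕ := ⌈β - 1⌉₊

/-- The Hölder ball `B^β_r([0,1]^m)`:  `⌈β-1⌉`-times continuously differentiable functions on
the interior of the cube (with uniformly continuous derivatives, so that they extend
continuously), with Hölder-`β` norm at most `r`. -/
def HolderBall (m : ℕ) (β r : ℝ) : Set ((Fin m → ℝ) → ℝ) :=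
  {f | ContinuousOn f (cube m) ∧
    ContDiffOn ℝ (smoothOrder β : ℕ∞) f (cubeo m) ∧
    (∀ u : Fin m → ℕ, (mord u : ℝ) < β → UniformContinuousOn (Dm u f) (cubeo m)) ∧
    holderNormOn m β (cubeo m) f ≤ ENNReal.ofReal r}

/-! ## Compositional function classes -/

/-- `G^H_m(dstar, β, r)`: Hölder-`β` functions of `dstar` of the `m` coordinates. -/
def GH (m dstar : ℕ) (β r : ℝ) : Set ((Fin m → ℝ) → ℝ) :=
  {f | ∃ (e : Fin dstar → Fin m) (g : (Fin dstar → ℝ) → ℝ),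
    StrictMono e ∧ g ∈ HolderBall dstar β r ∧ ∀ x ∈ cube m, f x = g fun j => x (e j)}

/-- `G^M_m(dmax)`: maxima of at most `dmax` coordinates. -/
def GM (m dmax : ℕ) : Set ((Fin m → ℝ) → ℝ) :=
  {f | ∃ (I : Finset (Fin m)) (hI : I.Nonempty), I.card ≤ dmax ∧
    ∀ x ∈ cube m, f x = I.sup' hI fun i => x i}

/-- The compositional class `G^CHOM_d(q, K, dmax, dstar, β, r)`. -/
def GCHOM (K dmax dstar : ℕ) (β r : ℝ) : ℕ → (d : ℕ) → Set ((Fin d → ℝ) → ℝ)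
  | 0, d => {f | ∃ h ∈ GH d dstar β r ∪ GM d dmax, ∀ x ∈ cube d, f x = h x}
  | q + 1, d =>
    {f | ∃ (H : (Fin d → ℝ) → Fin K → ℝ) (g : (Fin K → ℝ) → ℝ),
      (∀ j, (fun x => H x j) ∈ GH d dstar β r ∪ GM d dmax) ∧
      (∀ x ∈ cube d, H x ∈ cube K) ∧
      g ∈ GCHOM K dmax dstar β r q K ∧ ∀ x ∈ cube d, f x = g (H x)}

/-- The compositional class `G^CH_d(q, K, dstar, β, r)` (no max-value components). -/
def GCH (K dstar : ℕ) (β r : ℝ) : ℕ → (d : ℕ) → Set ((Fin d → ℝ) → ℝ)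
  | 0, d => {f | ∃ h ∈ GH d dstar β r, ∀ x ∈ cube d, f x = h x}
  | q + 1, d =>
    {f | ∃ (H : (Fin d → ℝ) → Fin K → ℝ) (g : (Fin K → ℝ) → ℝ),
      (∀ j, (fun x => H x j) ∈ GH d dstar β r) ∧
      (∀ x ∈ cube d, H x ∈ cube K) ∧
      g ∈ GCH K dstar β r q K ∧ ∀ x ∈ cube d, f x = g (H x)}

/-! ## Losses, risks, and data distributions -/

/-- The sign function (`sgn 0 = 1`). -/
def sgn (t : ℝ) : ℝ := if 0 ≤ t then 1 else -1

/-- The hinge loss. -/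
def hinge (t : ℝ) : ℝ := max 0 (1 - t)

/-- The truncation operator `T_F`. -/
def trunc (F t : ℝ) : ℝ := min F (max (-F) t)

/-- The joint distribution `P_{η,Q}` on `[0,1]^d × {-1,1}` with input marginal `Q` and
conditional class probability function `η`. -/
def jointMeasure {d : ℕ} (η : (Fin d → ℝ) → ℝ) (Q : Measure (Fin d → ℝ)) :
    Measure ((Fin d → ℝ) × ℝ) :=
  Q.bind fun x =>
    ENNReal.ofReal (η x) • Measure.dirac (x, (1 : ℝ)) +
      ENNReal.ofReal (1 - η x) • Measure.dirac (x, (-1 : ℝ))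

/-- The 0-1 risk (misclassification error). -/
def risk01 {d : ℕ} (P : Measure ((Fin d → ℝ) × ℝ)) (f : (Fin d → ℝ) → ℝ) : ℝ :=
  (P {p | sgn (f p.1) ≠ p.2}).toReal

/-- The infimum of the 0-1 risk over all measurable functions. -/
def bayes01 {d : ℕ} (P : Measure ((Fin d → ℝ) × ℝ)) : ℝ :=
  ⨅ g : {g : (Fin d → ℝ) → ℝ // Measurable g}, risk01 P g.1

/-- The excess 0-1 risk. -/
def excess01 {d : ℕ} (P : Measure ((Fin d → ℝ) × ℝ)) (f : (Fin d → ℝ) → ℝ) : ℝ :=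
  risk01 P f - bayes01 P

/-- The `φ`-risk. -/
def riskPhi {d : ℕ} (φ : ℝ → ℝ) (P : Measure ((Fin d → ℝ) × ℝ)) (f : (Fin d → ℝ) → ℝ) : ℝ :=
  ∫ p, φ (p.2 * f p.1) ∂P

/-- The infimum of the `φ`-risk over all measurable functions. -/
def bayesPhi {d : ℕ} (φ : ℝ → ℝ) (P : Measure ((Fin d → ℝ) × ℝ)) : ℝ :=
  ⨅ g : {g : (Fin d → ℝ) → ℝ // Measurable g}, riskPhi φ P g.1

/-- The excess `φ`-risk. -/
def excessPhi {d : ℕ} (φ : ℝ → ℝ) (P : Measure ((Fin d → ℝ) × ℝ)) (f : (Fin d → ℝ) → ℝ) : ℝ :=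
  riskPhi φ P f - bayesPhi φ P

/-- A Borel probability measure on `[0,1]^d × {-1,1}`, presented by its input marginal `Q`
(a Borel probability measure concentrated on the cube) and its conditional class
probability function `η` (measurable, `[0,1]`-valued);  the measure itself is
`jointMeasure η Q`. -/
structure DataDist (d : ℕ) where
  η : (Fin d → ℝ) → ℝ
  Q : Measure (Fin d → ℝ)
  η_meas : Measurable η
  η_mem : ∀ x, η x ∈ Set.Icc (0 : ℝ) 1
  Q_prob : IsProbabilityMeasure Q
  Q_cube : Q (cube d) = 1

/-- The measure on `[0,1]^d × {-1,1}` associated with a `DataDist`. -/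
def DataDist.P {d : ℕ} (D : DataDist d) : Measure ((Fin d → ℝ) × ℝ) := jointMeasure D.η D.Q

/-- `x ^ s` for `s ∈ [0,∞]`, with the conventions `x ^ ∞ = 0` for `x < 1` and `1 ^ ∞ = 1`. -/
def rpowE (x : ℝ≥0∞) (s : ℝ≥0∞) : ℝ≥0∞ :=
  if s = ∞ then (if x < 1 then 0 else if x = 1 then 1 else ∞) else x ^ s.toReal

/-- The Tsybakov noise class `T^{d,s}_{α,τ}` (noise exponent `s ∈ [0,∞]`,
threshold `τ ∈ (0,∞]`). -/
def Tsybakov (d : ℕ) (s : ℝ≥0∞) (α : ℝ) (τ : ℝ≥0∞) : Set (DataDist d) :=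
  {P | ∀ t : ℝ, 0 < t → ENNReal.ofReal t ≤ τ →
    P.Q ({x | |2 * P.η x - 1| ≤ t} ∩ cube d) ≤ ENNReal.ofReal α * rpowE (ENNReal.ofReal t) s}

/-- The class `H^{d,β,r}_{q,K,dstar,dmax}`: distributions whose conditional class probability
agrees a.s. with a member of `G^CHOM`. -/
def HCHOM (d q K dstar dmax : ℕ) (β r : ℝ) : Set (DataDist d) :=
  {P | ∃ f ∈ GCHOM K dmax dstar β r q d, ∀ᵐ x ∂P.Q, P.η x = f x}

/-- `M_{Λ,d}`: Borel probability measures on `[0,1]^d` with a `[0,Λ]`-valued density with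
respect to Lebesgue measure. -/
def MLam (d : ℕ) (Λ : ℝ) : Set (Measure (Fin d → ℝ)) :=
  {Q | ∃ g : (Fin d → ℝ) → ℝ, Measurable g ∧ (∀ x, g x ∈ Set.Icc 0 Λ) ∧
    Q = (volume.restrict (cube d)).withDensity fun x => ENNReal.ofReal (g x)}

/-- The class `H^{d,β,r,Λ}_{q,K,dstar}`: joint laws `P_{η,Q}` with `η ∈ G^CH` (valued in
`[0,1]`) and `Q ∈ M_{Λ,d}`. -/
def HCHL (d q K dstar : ℕ) (β r Λ : ℝ) : Set (DataDist d) :=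
  {P | (∃ f ∈ GCH K dstar β r q d, (∀ x ∈ cube d, f x ∈ Set.Icc (0 : ℝ) 1) ∧
      ∀ᵐ x ∂P.Q, P.η x = f x) ∧ P.Q ∈ MLam d Λ}

/-- The class `H^{d,β,r}_{q,K,dstar}`: joint laws `P_{η,Q}` with `η ∈ G^CH` (valued in
`[0,1]`) and `Q` an arbitrary Borel probability measure on the cube. -/
def HCH (d q K dstar : ℕ) (β r : ℝ) : Set (DataDist d) :=
  {P | ∃ f ∈ GCH K dstar β r q d, (∀ x ∈ cube d, f x ∈ Set.Icc (0 : ℝ) 1) ∧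
    ∀ᵐ x ∂P.Q, P.η x = f x}

/-! ## Samples and estimators -/

/-- The law of an i.i.d. sample of size `n` from `μ`. -/
def iid {α : Type*} [MeasurableSpace α] (μ : Measure α) : (n : ℕ) → Measure (Fin n → α)
  | 0 => Measure.dirac fun i => i.elim0
  | n + 1 => (iid μ n).bind fun p => μ.map fun a => Fin.snoc p a

/-- An estimator: a rule assigning to each sample of size `n` a function `[0,1]^d → ℝ`. -/
def Estimator (d n : ℕ) := (Fin n → (Fin d → ℝ) × ℝ) → (Fin d → ℝ) → ℝ

/-- (Joint) measurability of an estimator. -/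
def Estimator.Meas {d n : ℕ} (A : Estimator d n) : Prop :=
  Measurable fun p : (Fin n → (Fin d → ℝ) × ℝ) × (Fin d → ℝ) => A p.1 p.2

/-- The expected excess 0-1 risk `E_{P^{⊗n}}[E_P(f̂_n)]` of an estimator. -/
def expectedExcess01 {d : ℕ} (P : Measure ((Fin d → ℝ) × ℝ)) {n : ℕ} (A : Estimator d n) : ℝ :=
  ∫ ω, excess01 P (A ω) ∂iid P n

/-- The covering number `N(F, γ)` (uniform norm over `Ω`), valued in `ℝ≥0∞`. -/
def coveringNumber {X : Type*} (Ω : Set X) (F : Set (X → ℝ)) (γ : ℝ) : ℝ≥0∞ :=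
  ⨅ (A : Finset (X → ℝ))
    (_ : ↑A ⊆ F ∧ ∀ f ∈ F, ∃ g ∈ A, ∀ x ∈ Ω, |f x - g x| ≤ γ),
    (A.card : ℝ≥0∞)

/-- `f` is an empirical `φ`-risk minimizer over `F` for the sample `ω`. -/
def IsERM {d n : ℕ} (φ : ℝ → ℝ) (F : Set ((Fin d → ℝ) → ℝ))
    (ω : Fin n → (Fin d → ℝ) × ℝ) (f : (Fin d → ℝ) → ℝ) : Prop :=
  f ∈ F ∧ ∀ g ∈ F,
    (n : ℝ)⁻¹ * ∑ i, φ ((ω i).2 * f ((ω i).1)) ≤ (n : ℝ)⁻¹ * ∑ i, φ ((ω i).2 * g ((ω i).1))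

/-! ## ReLU neural networks -/

/-- A feedforward ReLU network with input dimension `d`. -/
structure ReLUNet (d : ℕ) where
  L : ℕ
  width : ℕ → ℕ
  W : (i : ℕ) → Fin (width (i + 1)) → Fin (width i) → ℝ
  v : (i : ℕ) → Fin (width i) → ℝ
  h0 : width 0 = d
  hL : width (L + 1) = 1

/-- The `i`-th intermediate layer output `W_i σ_{v_i} ⋯ W_1 σ_{v_1} W_0 x`. -/
def ReLUNet.layer {d : ℕ} (net : ReLUNet d) (x : Fin (net.width 0) → ℝ) :
    (i : ℕ) → Fin (net.width (i + 1)) → ℝ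
  | 0 => fun j => ∑ k, net.W 0 j k * x k
  | i + 1 => fun j => ∑ k, net.W (i + 1) j k * max 0 (net.layer x i k - net.v (i + 1) k)

/-- The real-valued function computed by a ReLU network. -/
def ReLUNet.eval {d : ℕ} (net : ReLUNet d) (x : Fin d → ℝ) : ℝ :=
  net.layer (fun j => x (Fin.cast net.h0 j)) net.L (Fin.cast net.hL.symm 0)

/-- The class `F^NN_d(G, N, S, B, Fb)` of ReLU networks with depth `≤ G`, widths `≤ N`,
at most `S` nonzero parameters, parameter magnitudes `≤ B`, and uniform norm on the cube
`≤ Fb`. -/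
def FNN (d : ℕ) (G N : ℝ) (S : ℝ≥0∞) (B : ℝ) (Fb : ℝ≥0∞) : Set ((Fin d → ℝ) → ℝ) :=
  {f | ∃ net : ReLUNet d,
    (∀ x, f x = net.eval x) ∧
    (net.L : ℝ) ≤ G ∧
    (∀ i ≤ net.L + 1, (net.width i : ℝ) ≤ N) ∧
    ((∑ i ∈ Finset.range (net.L + 1),
        (Nat.card {p : Fin (net.width (i + 1)) × Fin (net.width i) // net.W i p.1 p.2 ≠ 0}
          : ℝ≥0∞)) +
      ∑ i ∈ Finset.range net.L,
        (Nat.card {j : Fin (net.width (i + 1)) // net.v (i + 1) j ≠ 0} : ℝ≥0∞)) ≤ S ∧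
    (∀ i ≤ net.L, ∀ j k, |net.W i j k| ≤ B) ∧
    (∀ i, 1 ≤ i → i ≤ net.L → ∀ j, |net.v i j| ≤ B) ∧
    ∀ x ∈ cube d, ENNReal.ofReal |f x| ≤ Fb}

/-! ## Kullback–Leibler divergence -/

open Classical in
/-- The Kullback–Leibler divergence. -/
def KL {X : Type*} [MeasurableSpace X] (P Q : Measure X) : ℝ≥0∞ :=
  if P ≪ Q ∧ Integrable (fun x => Real.log (P.rnDeriv Q x).toReal) P then
    ENNReal.ofReal (∫ x, Real.log (P.rnDeriv Q x).toReal ∂P)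
  else ∞

/-- The exponent `e / (dstar/(s+1) + (1 + 1/(s+1))·e)` of the minimax rate, for noise
exponent `s ∈ [0,∞]` (equal to `1` when `s = ∞`). -/
def rateExp (dstar : ℕ) (e : ℝ) (s : ℝ≥0∞) : ℝ :=
  if s = ∞ then 1
  else e / ((dstar : ℝ) / (s.toReal + 1) + (1 + 1 / (s.toReal + 1)) * e)

/-! `P_{η₁,Q}` has density `η₁(x)/η₂(x)` at `(x, 1)` and `(1 - η₁(x))/(1 - η₂(x))` at `(x, -1)`
with respect to `P_{η₂,Q}`, so in the f-divergence form `KL(P‖R) = ∫ klFun (dP/dR) dR` the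
divergence disintegrates as `∫ KL(Ber η₁(x) ‖ Ber η₂(x)) dQ(x)`. The integrand vanishes off `A`,
and on `A` it is at most the χ²-divergence `(η₁ - η₂)² / (η₂ (1 - η₂)) ≤ 4ε² / (1/4 - ε²) ≤ 18 ε²`,
using `klFun t ≤ (t - 1)²`. -/

open InformationTheory

lemma KL_eq_klDiv {X : Type*} [MeasurableSpace X] (P Q : Measure X) [IsProbabilityMeasure P]
    [IsProbabilityMeasure Q] : KL P Q = klDiv P Q := by
  rw [KL, klDiv_def, show llr P Q = fun x => Real.log (P.rnDeriv Q x).toReal from rfl]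
  simp

lemma klFun_le_sq_sub_one {x : ℝ} (hx : 0 ≤ x) : klFun x ≤ (x - 1) ^ 2 := by
  have hlog : x * Real.log x ≤ x * (x - 1) := by
    rcases hx.eq_or_lt with rfl | hx
    · simp
    · exact mul_le_mul_of_nonneg_left (Real.log_le_sub_one_of_pos hx) hx.le
  rw [klFun_apply]
  nlinarith

/-- `KL(Ber p ‖ Ber q)`, written as the `klFun`-divergence of the two Bernoulli laws. -/
def klBernoulli (p q : ℝ) : ℝ := q * klFun (p / q) + (1 - q) * klFun ((1 - p) / (1 - q))

lemma klBernoulli_self (q : ℝ) : klBernoulli q q = 0 := by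
  have h : ∀ t : ℝ, t * klFun (t / t) = 0 := fun t => by
    rcases eq_or_ne t 0 with rfl | ht
    · simp
    · simp [ht, klFun_one]
  simp [klBernoulli, h]

lemma klBernoulli_le_chiSq {p q : ℝ} (hp : p ∈ Icc (0 : ℝ) 1) (hq : q ∈ Ioo (0 : ℝ) 1) :
    klBernoulli p q ≤ (p - q) ^ 2 / (q * (1 - q)) := by
  obtain ⟨hp0, hp1⟩ := hp
  obtain ⟨hq0, hq1⟩ := hq
  have hq1' : 0 < 1 - q := sub_pos.2 hq1
  calc klBernoulli p q
      ≤ q * (p / q - 1) ^ 2 + (1 - q) * ((1 - p) / (1 - q) - 1) ^ 2 := by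
        unfold klBernoulli
        gcongr
        · exact klFun_le_sq_sub_one (div_nonneg hp0 hq0.le)
        · exact klFun_le_sq_sub_one (div_nonneg (sub_nonneg.2 hp1) hq1'.le)
    _ = (p - q) ^ 2 / (q * (1 - q)) := by
        field_simp
        ring

lemma klBernoulli_le_of_near_half {ε p q : ℝ} (hε : ε ≤ 1 / 8)
    (hp : p ∈ Icc (1 / 2 - ε) (1 / 2 + ε)) (hq : q ∈ Icc (1 / 2 - ε) (1 / 2 + ε)) :
    klBernoulli p q ≤ 18 * ε ^ 2 := by
  obtain ⟨hp0, hp1⟩ := hp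
  obtain ⟨hq0, hq1⟩ := hq
  have hvar : 15 / 64 ≤ q * (1 - q) := by nlinarith
  calc klBernoulli p q ≤ (p - q) ^ 2 / (q * (1 - q)) :=
        klBernoulli_le_chiSq ⟨by linarith, by linarith⟩ ⟨by linarith, by linarith⟩
    _ ≤ 18 * ε ^ 2 := by
        rw [div_le_iff₀ (by linarith)]
        nlinarith

section JointMeasure

variable {d : ℕ} {η η₁ η₂ : (Fin d → ℝ) → ℝ} {Q : Measure (Fin d → ℝ)}

lemma measurable_jointMeasure_fiber (hη : Measurable η) :
    Measurable fun x => ENNReal.ofReal (η x) • Measure.dirac (x, (1 : ℝ)) +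
      ENNReal.ofReal (1 - η x) • Measure.dirac (x, (-1 : ℝ)) := by
  refine Measure.measurable_of_measurable_coe _ fun s hs => ?_
  simp only [Measure.coe_add, Measure.coe_smul, Pi.add_apply, Pi.smul_apply, smul_eq_mul,
    Measure.dirac_apply' _ hs]
  have hind : ∀ y : ℝ,
      Measurable fun x : Fin d → ℝ => s.indicator (1 : (Fin d → ℝ) × ℝ → ℝ≥0∞) (x, y) :=
    fun y => (measurable_one.indicator hs).comp (measurable_id.prodMk measurable_const)
  exact ((ENNReal.measurable_ofReal.comp hη).mul (hind 1)).add
    ((ENNReal.measurable_ofReal.comp (measurable_const.sub hη)).mul (hind (-1)))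

lemma lintegral_jointMeasure (hη : Measurable η) {g : (Fin d → ℝ) × ℝ → ℝ≥0∞}
    (hg : Measurable g) :
    ∫⁻ z, g z ∂jointMeasure η Q =
      ∫⁻ x, ENNReal.ofReal (η x) * g (x, 1) + ENNReal.ofReal (1 - η x) * g (x, -1) ∂Q := by
  rw [jointMeasure, Measure.lintegral_bind (measurable_jointMeasure_fiber hη).aemeasurable
    hg.aemeasurable]
  congr 1 with x
  rw [lintegral_add_measure, lintegral_smul_measure, lintegral_smul_measure,
    lintegral_dirac' _ hg, lintegral_dirac' _ hg, smul_eq_mul, smul_eq_mul]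

lemma jointMeasure_univ (hη : Measurable η) (hη01 : ∀ x, η x ∈ Icc (0 : ℝ) 1) :
    jointMeasure η Q univ = Q univ := by
  rw [← lintegral_one, lintegral_jointMeasure hη measurable_const, ← lintegral_one]
  congr 1 with x
  rw [mul_one, mul_one, ← ENNReal.ofReal_add (hη01 x).1 (sub_nonneg.2 (hη01 x).2)]
  simp

lemma isProbabilityMeasure_jointMeasure [IsProbabilityMeasure Q] (hη : Measurable η)
    (hη01 : ∀ x, η x ∈ Icc (0 : ℝ) 1) : IsProbabilityMeasure (jointMeasure η Q) :=
  ⟨by rw [jointMeasure_univ hη hη01, measure_univ]⟩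

/-- The likelihood ratio `dP_{η₁,Q} / dP_{η₂,Q}` at a point `(x, y)` with `y = ±1`. -/
def labelRatio (η₁ η₂ : (Fin d → ℝ) → ℝ) (z : (Fin d → ℝ) × ℝ) : ℝ :=
  if z.2 = 1 then η₁ z.1 / η₂ z.1 else (1 - η₁ z.1) / (1 - η₂ z.1)

lemma measurable_labelRatio (h1m : Measurable η₁) (h2m : Measurable η₂) :
    Measurable (labelRatio η₁ η₂) :=
  Measurable.ite ((measurableSet_singleton (1 : ℝ)).preimage measurable_snd)
    ((h1m.comp measurable_fst).div (h2m.comp measurable_fst))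
    ((measurable_const.sub (h1m.comp measurable_fst)).div
      (measurable_const.sub (h2m.comp measurable_fst)))

lemma labelRatio_nonneg (h1r : ∀ x, η₁ x ∈ Icc (0 : ℝ) 1) (h2r : ∀ x, η₂ x ∈ Icc (0 : ℝ) 1)
    (z : (Fin d → ℝ) × ℝ) : 0 ≤ labelRatio η₁ η₂ z := by
  unfold labelRatio
  split_ifs
  · exact div_nonneg (h1r _).1 (h2r _).1
  · exact div_nonneg (sub_nonneg.2 (h1r _).2) (sub_nonneg.2 (h2r _).2)

lemma ofReal_mul_div_cancel {a b : ℝ} (ha : 0 ≤ a) (hab : a = 0 → b = 0) :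
    ENNReal.ofReal a * ENNReal.ofReal (b / a) = ENNReal.ofReal b := by
  rcases ha.eq_or_lt with rfl | ha
  · simp [hab rfl]
  · rw [← ENNReal.ofReal_mul ha.le, mul_div_cancel₀ _ ha.ne']

lemma jointMeasure_eq_withDensity_labelRatio (h1m : Measurable η₁) (h2m : Measurable η₂)
    (h2r : ∀ x, η₂ x ∈ Icc (0 : ℝ) 1)
    (hsupp : ∀ᵐ x ∂Q, (η₂ x = 0 → η₁ x = 0) ∧ (η₂ x = 1 → η₁ x = 1)) :
    jointMeasure η₁ Q =
      (jointMeasure η₂ Q).withDensity fun z => ENNReal.ofReal (labelRatio η₁ η₂ z) := by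
  have hρ : Measurable fun z => ENNReal.ofReal (labelRatio η₁ η₂ z) :=
    ENNReal.measurable_ofReal.comp (measurable_labelRatio h1m h2m)
  ext s hs
  rw [withDensity_apply _ hs, ← lintegral_indicator hs, ← lintegral_indicator_one hs,
    lintegral_jointMeasure h1m (measurable_one.indicator hs),
    lintegral_jointMeasure h2m (hρ.indicator hs)]
  refine lintegral_congr_ae ?_
  filter_upwards [hsupp] with x ⟨h0, h1⟩
  have hpos : ENNReal.ofReal (η₂ x) * ENNReal.ofReal (labelRatio η₁ η₂ (x, 1)) =
      ENNReal.ofReal (η₁ x) := by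
    simpa [labelRatio] using ofReal_mul_div_cancel (h2r x).1 h0
  have hneg : ENNReal.ofReal (1 - η₂ x) * ENNReal.ofReal (labelRatio η₁ η₂ (x, -1)) =
      ENNReal.ofReal (1 - η₁ x) := by
    have := ofReal_mul_div_cancel (sub_nonneg.2 (h2r x).2) (a := 1 - η₂ x) (b := 1 - η₁ x)
      (fun h => by linarith [h1 (by linarith)])
    simpa [labelRatio, show (-1 : ℝ) ≠ 1 by norm_num] using this
  rw [← hpos, ← hneg]
  by_cases h₁ : (x, (1 : ℝ)) ∈ s <;> by_cases h₂ : (x, (-1 : ℝ)) ∈ s <;> simp [h₁, h₂]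

lemma klDiv_jointMeasure [IsProbabilityMeasure Q] (h1m : Measurable η₁) (h2m : Measurable η₂)
    (h1r : ∀ x, η₁ x ∈ Icc (0 : ℝ) 1) (h2r : ∀ x, η₂ x ∈ Icc (0 : ℝ) 1)
    (hsupp : ∀ᵐ x ∂Q, (η₂ x = 0 → η₁ x = 0) ∧ (η₂ x = 1 → η₁ x = 1)) :
    klDiv (jointMeasure η₁ Q) (jointMeasure η₂ Q) =
      ∫⁻ x, ENNReal.ofReal (klBernoulli (η₁ x) (η₂ x)) ∂Q := by
  have := isProbabilityMeasure_jointMeasure (Q := Q) h1m h1r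
  have := isProbabilityMeasure_jointMeasure (Q := Q) h2m h2r
  have hr := measurable_labelRatio h1m h2m
  have hW := jointMeasure_eq_withDensity_labelRatio h1m h2m h2r hsupp
  have hac : jointMeasure η₁ Q ≪ jointMeasure η₂ Q :=
    hW ▸ withDensity_absolutelyContinuous _ _
  have hrn : (jointMeasure η₁ Q).rnDeriv (jointMeasure η₂ Q) =ᵐ[jointMeasure η₂ Q]
      fun z => ENNReal.ofReal (labelRatio η₁ η₂ z) :=
    hW ▸ Measure.rnDeriv_withDensity _ (ENNReal.measurable_ofReal.comp hr)
  rw [klDiv_eq_lintegral_klFun_of_ac hac, lintegral_congr_ae (hrn.mono fun z hz => by rw [hz]),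
    lintegral_jointMeasure h2m (by fun_prop)]
  congr 1 with x
  rw [ENNReal.toReal_ofReal (labelRatio_nonneg h1r h2r _),
    ENNReal.toReal_ofReal (labelRatio_nonneg h1r h2r _), ← ENNReal.ofReal_mul (h2r x).1,
    ← ENNReal.ofReal_mul (sub_nonneg.2 (h2r x).2), ← ENNReal.ofReal_add]
  · simp [klBernoulli, labelRatio, show (-1 : ℝ) ≠ 1 by norm_num]
  · exact mul_nonneg (h2r x).1 (klFun_nonneg (labelRatio_nonneg h1r h2r _))
  · exact mul_nonneg (sub_nonneg.2 (h2r x).2) (klFun_nonneg (labelRatio_nonneg h1r h2r _))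

end JointMeasure

theorem statement_14_general
    (d : ℕ) (ε : ℝ) (hε : ε ∈ Set.Ioc (0 : ℝ) (1 / 8))
    (Q : Measure (Fin d → ℝ)) (hQ : IsProbabilityMeasure Q) (hQc : Q (cube d) = 1)
    (A : Set (Fin d → ℝ))
    (η₁ η₂ : (Fin d → ℝ) → ℝ) (h1m : Measurable η₁) (h2m : Measurable η₂)
    (h1r : ∀ x, η₁ x ∈ Set.Icc (0 : ℝ) 1) (h2r : ∀ x, η₂ x ∈ Set.Icc (0 : ℝ) 1)
    (heq : ∀ x ∈ cube d \ A, η₁ x = η₂ x)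
    (hball : ∀ x ∈ A, η₁ x ∈ Set.Icc (1 / 2 - ε) (1 / 2 + ε) ∧
      η₂ x ∈ Set.Icc (1 / 2 - ε) (1 / 2 + ε)) :
    KL (jointMeasure η₁ Q) (jointMeasure η₂ Q) ≤ ENNReal.ofReal (18 * ε ^ 2) * Q A := by
  have hcube : ∀ᵐ x ∂Q, x ∈ cube d :=
    (mem_ae_iff_prob_eq_one (MeasurableSet.univ_pi fun _ => measurableSet_Icc)).2 hQc
  have hsupp : ∀ᵐ x ∂Q, (η₂ x = 0 → η₁ x = 0) ∧ (η₂ x = 1 → η₁ x = 1) := by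
    filter_upwards [hcube] with x hx
    by_cases hxA : x ∈ A
    · obtain ⟨-, hlo, hhi⟩ := hball x hxA
      constructor <;> intro h <;> linarith [hε.2]
    · rw [heq x ⟨hx, hxA⟩]
      exact ⟨id, id⟩
  have hpt : ∀ᵐ x ∂Q, ENNReal.ofReal (klBernoulli (η₁ x) (η₂ x)) ≤
      A.indicator (fun _ => ENNReal.ofReal (18 * ε ^ 2)) x := by
    filter_upwards [hcube] with x hx
    by_cases hxA : x ∈ A
    · rw [indicator_of_mem hxA]
      exact ENNReal.ofReal_le_ofReal
        (klBernoulli_le_of_near_half hε.2 (hball x hxA).1 (hball x hxA).2)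
    · rw [heq x ⟨hx, hxA⟩, klBernoulli_self]
      simp
  have := isProbabilityMeasure_jointMeasure (Q := Q) h1m h1r
  have := isProbabilityMeasure_jointMeasure (Q := Q) h2m h2r
  calc KL (jointMeasure η₁ Q) (jointMeasure η₂ Q)
      = ∫⁻ x, ENNReal.ofReal (klBernoulli (η₁ x) (η₂ x)) ∂Q := by
        rw [KL_eq_klDiv, klDiv_jointMeasure h1m h2m h1r h2r hsupp]
    _ ≤ ∫⁻ x, A.indicator (fun _ => ENNReal.ofReal (18 * ε ^ 2)) x ∂Q := lintegral_mono_ae hpt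
    _ ≤ ENNReal.ofReal (18 * ε ^ 2) * Q A := lintegral_indicator_const_le _ _

/-- Lemma 6.8 : KL-divergence bound between two joint laws. -/
theorem statement_14
    (d : ℕ) (hd : 0 < d) (ε : ℝ) (hε : ε ∈ Set.Ioc (0 : ℝ) (1 / 8))
    (Q : Measure (Fin d → ℝ)) (hQ : IsProbabilityMeasure Q) (hQc : Q (cube d) = 1)
    (A : Set (Fin d → ℝ)) (hAm : MeasurableSet A) (hAc : A ⊆ cube d)
    (η₁ η₂ : (Fin d → ℝ) → ℝ) (h1m : Measurable η₁) (h2m : Measurable η₂)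
    (h1r : ∀ x, η₁ x ∈ Set.Icc (0 : ℝ) 1) (h2r : ∀ x, η₂ x ∈ Set.Icc (0 : ℝ) 1)
    (heq : ∀ x ∈ cube d \ A, η₁ x = η₂ x)
    (hball : ∀ x ∈ A, η₁ x ∈ Set.Icc (1 / 2 - ε) (1 / 2 + ε) ∧
      η₂ x ∈ Set.Icc (1 / 2 - ε) (1 / 2 + ε)) :
    KL (jointMeasure η₁ Q) (jointMeasure η₂ Q) ≤ ENNReal.ofReal (18 * ε ^ 2) * Q A :=
  statement_14_general d ε hε Q hQ hQc A η₁ η₂ h1m h2m h1r h2r heq hball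

end ZZS
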